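/- arXiv:1212.2739 — 3 statements merged into one kernel-verified Lean document; each statement's English description precedes it below -/
import Mathlib

section
/- In a free group F(S) on a set S, there exist finite quotients with no short relations: for every N ∈ ℕ and every finite set S, there is a finite group V generated by a copy of S such that every nontrivial word of length at most N in the generators S ∪ S⁻¹ represents a nontrivial element of V. -/
/-!
The ball `B` of radius `N` in the free group on a finite set `S` is finite. Left multiplication
by a generator `s` is a partial injection of `B` into itself, so it extends to a permutation
`σ s` of `B`. All suffixes of the reduced word of `w ∈ B` lie in `B`, so the induced
homomorphism `FreeGroup S → Perm B` maps `1` to `w`; hence no nontrivial `w ∈ B` is in its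
kernel, a normal subgroup of finite index.
-/

theorem Equiv.Perm.exists_apply_eq_smul_of_smul_mem {G α : Type*} [Group G] [MulAction G α]
    (B : Set α) [Finite B] (g : G) :
    ∃ σ : Equiv.Perm B, ∀ (b : B) (hb : g • (b : α) ∈ B), σ b = ⟨g • (b : α), hb⟩ := by
  classical
  let e : {b : B // g • (b : α) ∈ B} ≃ {b : B // g⁻¹ • (b : α) ∈ B} :=
    { toFun := fun b => ⟨⟨g • (b : α), b.2⟩, by simp⟩
      invFun := fun b => ⟨⟨g⁻¹ • (b : α), b.2⟩, by simp⟩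
      left_inv := fun b => by simp
      right_inv := fun b => by simp }
  exact ⟨e.extendSubtype, fun b hb => e.extendSubtype_apply_of_mem b hb⟩

namespace FreeGroup

theorem finite_setOf_norm_le {S : Type*} [DecidableEq S] [Finite S] (N : ℕ) :
    {w : FreeGroup S | w.norm ≤ N}.Finite :=
  (List.finite_length_le (S × Bool) N).preimage toWord_injective.injOn

section PermOfBall

variable {S : Type*} {B : Set (FreeGroup S)} (σ : S → Equiv.Perm B)
  (hσ : ∀ s (b : B) (hb : of s * (b : FreeGroup S) ∈ B), σ s b = ⟨of s * b, hb⟩)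
include hσ

theorem coe_lift_mk_singleton_apply (a : S × Bool) (b : B)
    (hb : mk [a] * (b : FreeGroup S) ∈ B) :
    (lift σ (mk [a]) b : FreeGroup S) = mk [a] * b := by
  obtain ⟨s, _ | _⟩ := a
  · have hinv : mk [(s, false)] = (of s)⁻¹ := rfl
    simp only [hinv] at hb ⊢
    have hσinv : (σ s)⁻¹ b = ⟨(of s)⁻¹ * b, hb⟩ := by
      rw [Equiv.Perm.inv_eq_iff_eq, hσ s _ (by simp)]
      simp
    rw [MonoidHom.map_inv, lift_apply_of, hσinv]
  · exact congrArg Subtype.val (hσ s b hb)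

theorem coe_lift_mk_apply_one (h1 : 1 ∈ B) (L : List (S × Bool))
    (hL : ∀ L', L' <:+ L → mk L' ∈ B) :
    (lift σ (mk L) ⟨1, h1⟩ : FreeGroup S) = mk L := by
  induction L with
  | nil => rfl
  | cons a L ih =>
    have hmk : mk [a] * mk L = mk (a :: L) := mul_mk
    have hL' := ih fun L' h => hL L' (h.trans (L.suffix_cons a))
    have hmem : mk [a] * (lift σ (mk L) ⟨1, h1⟩ : FreeGroup S) ∈ B := by
      rw [hL', hmk]
      exact hL _ List.suffix_rfl
    rw [← hmk, MonoidHom.map_mul, Equiv.Perm.mul_apply,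
      coe_lift_mk_singleton_apply σ hσ _ _ hmem, hL']

end PermOfBall

end FreeGroup

theorem freeGroup_finite_quotient_no_short_relations (N : ℕ) (S : Type) [Finite S] :
    ∃ H : Subgroup (FreeGroup S), H.Normal ∧ H.FiniteIndex ∧
      ∀ w : FreeGroup S, w ≠ 1 →
        (@FreeGroup.toWord S (Classical.decEq S) w).length ≤ N → w ∉ H := by
  classical
  let B := {w : FreeGroup S | w.norm ≤ N}
  have : Finite B := (FreeGroup.finite_setOf_norm_le N).to_subtype
  have h1 : (1 : FreeGroup S) ∈ B := by simp [B]
  choose σ hσ using fun s : S =>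
    Equiv.Perm.exists_apply_eq_smul_of_smul_mem B (FreeGroup.of s)
  refine ⟨(FreeGroup.lift σ).ker, inferInstance, Subgroup.finiteIndex_ker _,
    fun w hw hlen hker => hw ?_⟩
  have hsuffix : ∀ L', L' <:+ w.toWord → FreeGroup.mk L' ∈ B := fun L' hL' =>
    (FreeGroup.norm_mk_le.trans hL'.length_le).trans hlen
  have := FreeGroup.coe_lift_mk_apply_one σ hσ h1 w.toWord hsuffix
  rw [FreeGroup.mk_toWord, (FreeGroup.lift σ).mem_ker.mp hker] at this
  exact this.symm
end

section
/- In a graph product G of groups G_v over a finite simple graph Γ, for any subset J of the vertex set, the subgroup generated by the G_j for j ∈ J is isomorphic to the graph product of the groups G_j (j ∈ J) over the full subgraph of Γ induced on J. -/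
/-- The defining relators of a graph product: commutators of elements of
adjacent vertex groups, inside the free product. -/
def graphProductRels {V : Type*} (Γ : SimpleGraph V) (G : V → Type*)
    [∀ v, Group (G v)] : Subgroup (Monoid.CoprodI G) :=
  Subgroup.normalClosure
    {x | ∃ (v w : V) (gv : G v) (gw : G w), Γ.Adj v w ∧
      x = Monoid.CoprodI.of gv * Monoid.CoprodI.of gw *
          (Monoid.CoprodI.of gv)⁻¹ * (Monoid.CoprodI.of gw)⁻¹}

/-- The graph product of the groups `G v` over the simple graph `Γ`: the
quotient of their free product by the normal closure of the commutators of
elements of adjacent vertex groups. -/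
def GraphProduct {V : Type*} (Γ : SimpleGraph V) (G : V → Type*)
    [∀ v, Group (G v)] : Type _ :=
  Monoid.CoprodI G ⧸ graphProductRels Γ G

instance {V : Type*} (Γ : SimpleGraph V) (G : V → Type*) [∀ v, Group (G v)] :
    (graphProductRels Γ G).Normal :=
  Subgroup.normalClosure_normal

instance {V : Type*} (Γ : SimpleGraph V) (G : V → Type*) [∀ v, Group (G v)] :
    Group (GraphProduct Γ G) :=
  QuotientGroup.Quotient.group _

/-- The canonical embedding of a vertex group into the graph product. -/
def GraphProduct.of {V : Type*} (Γ : SimpleGraph V) (G : V → Type*)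
    [∀ v, Group (G v)] (v : V) : G v →* GraphProduct Γ G :=
  (QuotientGroup.mk' (graphProductRels Γ G)).comp Monoid.CoprodI.of

/-
The vertex groups `G j`, `j ∈ J`, induce a homomorphism from the graph product over
`Γ.induce J` to the graph product over `Γ`, whose image is the subgroup they generate. It has a
left inverse, the retraction that is the identity on `G j` for `j ∈ J` and kills `G v` for
`v ∉ J`: every defining relation involving a killed vertex becomes trivial.
-/

namespace GraphProduct

variable {V : Type*} {Γ : SimpleGraph V} {G : V → Type*} [∀ v, Group (G v)]
  {H : Type*} [Group H]

def mk : Monoid.CoprodI G →* GraphProduct Γ G :=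
  QuotientGroup.mk' _

theorem mk_surjective : Function.Surjective (mk : Monoid.CoprodI G →* GraphProduct Γ G) :=
  QuotientGroup.mk'_surjective _

theorem of_commute {v w : V} (h : Γ.Adj v w) (gv : G v) (gw : G w) :
    Commute (of Γ G v gv) (of Γ G w gw) := by
  rw [← commutatorElement_eq_one_iff_commute, commutatorElement_def]
  exact (QuotientGroup.eq_one_iff _).mpr (Subgroup.subset_normalClosure ⟨v, w, gv, gw, h, rfl⟩)

@[ext]
theorem hom_ext {φ ψ : GraphProduct Γ G →* H}
    (h : ∀ v, φ.comp (of Γ G v) = ψ.comp (of Γ G v)) : φ = ψ :=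
  QuotientGroup.monoidHom_ext _ <| Monoid.CoprodI.ext_hom _ _ h

def lift (f : ∀ v, G v →* H)
    (hf : ∀ v w, Γ.Adj v w → ∀ (gv : G v) (gw : G w), Commute (f v gv) (f w gw)) :
    GraphProduct Γ G →* H :=
  QuotientGroup.lift _ (Monoid.CoprodI.lift f) <| by
    refine Subgroup.normalClosure_le_normal ?_
    rintro _ ⟨v, w, gv, gw, hadj, rfl⟩
    simp only [SetLike.mem_coe, MonoidHom.mem_ker, map_mul, map_inv, Monoid.CoprodI.lift_of,
      (hf v w hadj gv gw).eq, mul_inv_cancel_right, mul_inv_cancel]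

section Lift

variable (f : ∀ v, G v →* H)
  (hf : ∀ v w, Γ.Adj v w → ∀ (gv : G v) (gw : G w), Commute (f v gv) (f w gw))

@[simp]
theorem lift_of (v : V) (g : G v) : lift f hf (of Γ G v g) = f v g :=
  Monoid.CoprodI.lift_of f g

theorem range_lift : (lift f hf).range = ⨆ v, (f v).range := by
  have hcomp : (lift f hf).comp mk = Monoid.CoprodI.lift f := rfl
  rw [← Monoid.CoprodI.range_eq_iSup, ← hcomp, MonoidHom.range_comp,
    MonoidHom.range_eq_top.mpr mk_surjective, ← MonoidHom.range_eq_map]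

end Lift

section Induce

variable (Γ G) (J : Set V)

def inclInduce : GraphProduct (Γ.induce J) (fun j : J => G j) →* GraphProduct Γ G :=
  lift (fun j => of Γ G j) fun _ _ h => of_commute (SimpleGraph.comap_adj.mp h)

open Classical in
noncomputable def projInduce :
    GraphProduct Γ G →* GraphProduct (Γ.induce J) (fun j : J => G j) :=
  lift (fun v => if hv : v ∈ J then of (Γ.induce J) (fun j : J => G j) ⟨v, hv⟩ else 1) <| by
    intro v w hadj gv gw
    by_cases hv : v ∈ J
    · by_cases hw : w ∈ J
      · simp only [dif_pos hv, dif_pos hw]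
        exact of_commute (G := fun j : J => G j) (v := ⟨v, hv⟩) (w := ⟨w, hw⟩) hadj gv gw
      · simp only [dif_neg hw, MonoidHom.one_apply, Commute.one_right]
    · simp only [dif_neg hv, MonoidHom.one_apply, Commute.one_left]

theorem projInduce_comp_inclInduce :
    (projInduce Γ G J).comp (inclInduce Γ G J) = MonoidHom.id _ := by
  ext j g
  simp [inclInduce, projInduce]

theorem inclInduce_injective : Function.Injective (inclInduce Γ G J) :=
  Function.LeftInverse.injective (DFunLike.congr_fun (projInduce_comp_inclInduce Γ G J))

theorem range_inclInduce :
    (inclInduce Γ G J).range = ⨆ j ∈ J, (of Γ G j).range := by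
  rw [inclInduce, range_lift]
  exact iSup_subtype

end Induce

end GraphProduct

theorem graphProduct_subgroup_iso_general {V : Type} (Γ : SimpleGraph V)
    (G : V → Type) [∀ v, Group (G v)] (J : Set V) :
    Nonempty
      ((⨆ j ∈ J, (GraphProduct.of Γ G j).range : Subgroup (GraphProduct Γ G)) ≃*
        GraphProduct (Γ.induce J) (fun j : J => G j)) :=
  ⟨(MulEquiv.subgroupCongr (GraphProduct.range_inclInduce Γ G J).symm).trans
    (MonoidHom.ofInjective (GraphProduct.inclInduce_injective Γ G J)).symm⟩

/-- In a graph product over a finite simple graph, the subgroup generated by the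
vertex groups `G j` for `j ∈ J` is isomorphic to the graph product over the full
subgraph induced on `J`. -/
theorem graphProduct_subgroup_iso {V : Type} [Fintype V] (Γ : SimpleGraph V)
    (G : V → Type) [∀ v, Group (G v)] (J : Set V) :
    Nonempty
      ((⨆ j ∈ J, (GraphProduct.of Γ G j).range : Subgroup (GraphProduct Γ G)) ≃*
        GraphProduct (Γ.induce J) (fun j : J => G j)) :=
  graphProduct_subgroup_iso_general Γ G J
end

section
/- If G is an extension of a sofic group by an amenable group (i.e., G has a normal subgroup N with N sofic and G/N amenable), then G is sofic. -/
/-- Two permutations `f, g` of `A` are `ε`-similar if the number of points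
where they differ is at most `ε·|A|`. -/
def SimilarLE {A : Type*} (ε : ℝ) (f g : Equiv.Perm A) : Prop :=
  (Nat.card {a : A // f a ≠ g a} : ℝ) ≤ ε * Nat.card A

/-- A special `(F,ε)`-quasi-action of a group `G` on `A`. -/
structure IsSpecialQuasiAction {G A : Type*} [Group G] (F : Set G) (ε : ℝ)
    (φ : G → Equiv.Perm A) : Prop where
  map_one : φ 1 = 1
  map_inv : ∀ g : G, φ g⁻¹ = (φ g)⁻¹
  fixed_point_free : ∀ g ∈ F, g ≠ 1 → ∀ a : A, φ g a ≠ a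
  approx_mul : ∀ g₁ ∈ F, ∀ g₂ ∈ F, SimilarLE ε (φ (g₁ * g₂)) (φ g₁ * φ g₂)

/-- A group is sofic if for every `ε ∈ (0,1)` and finite `F ⊆ G` there is a
special `(F,ε)`-quasi-action on a finite nonempty set. -/
def IsSofic (G : Type*) [Group G] : Prop :=
  ∀ ε : ℝ, 0 < ε → ε < 1 → ∀ F : Finset G,
    ∃ (A : Type) (_ : Finite A) (_ : Nonempty A) (φ : G → Equiv.Perm A),
      IsSpecialQuasiAction (F : Set G) ε φ

/-- A group is amenable if it satisfies the Følner condition: for every finite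
subset `S` and every `ε > 0` there is a nonempty finite Følner set `F` that is
`ε`-almost invariant under left translation by each element of `S`. -/
def IsAmenable (G : Type*) [Group G] : Prop :=
  ∀ (S : Finset G) (ε : ℝ), 0 < ε → ∃ F : Finset G, F.Nonempty ∧
    ∀ g ∈ S, (Nat.card ↥((g * ·) '' (F : Set G) \ (F : Set G)) : ℝ) ≤ ε * F.card

/-!
Fix a Følner set `E ⊆ G ⧸ N` for the finitely many relevant elements, and a quasi-action `ψ`
of `N` on a finite set `B` that is good on the finitely many values of the cocycle
`c(g, q) = (g q).out⁻¹ * g * q.out ∈ N` that occur. Then `g` acts partially on `E × B` by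
`(q, b) ↦ (g q, ψ (c(g, q)) b)` wherever `g q ∈ E`. By the cocycle identity this partial
action is multiplicative off a small set: the Følner condition controls the points leaving `E`,
and the approximate multiplicativity of `ψ` controls the rest. Each partial bijection is
completed to a permutation of `E × B × Bool` that flips the Boolean coordinate off its domain,
so that no new fixed points appear; completing on one element of each pair `{g, g⁻¹}` and
inverting on the other gives exact compatibility with inverses.
-/

theorem exists_forall_map_inv {ι M : Type*} [InvolutiveInv ι] [InvolutiveInv M]
    (P : ι → M → Prop) (hP : ∀ i m, P i m → P i⁻¹ m⁻¹)
    (h : ∀ i, ∃ m, P i m ∧ (i⁻¹ = i → m⁻¹ = m)) :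
    ∃ φ : ι → M, (∀ i, φ i⁻¹ = (φ i)⁻¹) ∧ ∀ i, P i (φ i) := by
  choose s hs hs_inv using h
  classical
  let : LinearOrder ι := linearOrderOfSTO WellOrderingRel
  refine ⟨fun i => if i ≤ i⁻¹ then s i else (s i⁻¹)⁻¹, fun i => ?_, fun i => ?_⟩
  · rcases lt_trichotomy i i⁻¹ with h | h | h
    · simp [h.le, h.not_ge]
    · simp [← h, hs_inv i h.symm]
    · simp [h.le, h.not_ge]
  · dsimp only
    split_ifs
    · exact hs i
    · simpa using hP _ _ (hs i⁻¹)

namespace PartialEquiv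

variable {X : Type*}

structure IsFreeExtension (e : PartialEquiv X X) (σ : Equiv.Perm (X × Bool)) : Prop where
  apply_of_mem : ∀ x ∈ e.source, ∀ b, σ (x, b) = (e x, b)
  apply_ne_of_notMem : ∀ x ∉ e.source, ∀ b, σ (x, b) ≠ (x, b)

theorem IsFreeExtension.symm {e : PartialEquiv X X} {σ : Equiv.Perm (X × Bool)}
    (h : e.IsFreeExtension σ) : e.symm.IsFreeExtension σ⁻¹ where
  apply_of_mem x hx b := by
    rw [Equiv.Perm.inv_def, Equiv.symm_apply_eq, h.apply_of_mem _ (e.map_target hx),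
      e.right_inv hx]
  apply_ne_of_notMem x hx b hfix := by
    replace hfix : σ (x, b) = (x, b) := by rw [← Equiv.Perm.eq_inv_iff_eq, hfix]
    by_cases hs : x ∈ e.source
    · rw [h.apply_of_mem x hs, Prod.mk.injEq] at hfix
      exact hx (hfix.1 ▸ e.map_source hs)
    · exact h.apply_ne_of_notMem x hs b hfix

theorem apply_mem_target_iff_of_eqOn {e : PartialEquiv X X} {τ : Equiv.Perm X}
    (hτ : Set.EqOn τ e e.source) {x : X} : τ x ∈ e.target ↔ x ∈ e.source := by
  refine ⟨fun hx => ?_, fun hx => hτ hx ▸ e.map_source hx⟩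
  have hsymm : τ (e.symm (τ x)) = τ x := by
    rw [hτ (e.map_target hx), e.right_inv hx]
  exact τ.injective hsymm ▸ e.map_target hx

variable [Finite X]

theorem exists_perm_eqOn_source (e : PartialEquiv X X) :
    ∃ τ : Equiv.Perm X, Set.EqOn τ e e.source ∧ (e.symm = e → τ⁻¹ = τ) := by
  classical
  by_cases he : e.symm = e
  · have hinv : ∀ x ∈ e.source, e (e x) = x := fun x hx => by
      simpa [he] using e.left_inv hx
    have hmem : ∀ x ∈ e.source, e x ∈ e.source := fun x hx => by
      simpa [← e.symm_source, he] using e.map_source hx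
    let τ := Function.Involutive.toPerm (fun x => if x ∈ e.source then e x else x) fun x => by
      by_cases hx : x ∈ e.source <;> simp [hx, hmem, hinv]
    exact ⟨τ, fun _ hx => if_pos hx, fun _ => Function.Involutive.toPerm_symm _⟩
  · let τ := (e.bijOn.equiv e).extendSubtype
    exact ⟨τ, fun x hx => Equiv.extendSubtype_apply_of_mem _ x hx, fun h => (he h).elim⟩

theorem exists_isFreeExtension (e : PartialEquiv X X) :
    ∃ σ, e.IsFreeExtension σ ∧ (e.symm = e → σ⁻¹ = σ) := by
  classical
  obtain ⟨τ, hτ, hτ_inv⟩ := e.exists_perm_eqOn_source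
  let σ := τ.prodShear fun x => if x ∈ e.source then Equiv.refl Bool else Equiv.boolNot
  refine ⟨σ, ⟨fun x hx b => by simp [σ, hx, hτ hx], fun x hx b => by simp [σ, hx]⟩,
    fun he => ?_⟩
  have hsource : ∀ x, τ x ∈ e.source ↔ x ∈ e.source := fun x => by
    have := apply_mem_target_iff_of_eqOn hτ (x := x)
    rwa [← e.symm_source, he] at this
  refine inv_eq_of_mul_eq_one_right (Equiv.ext fun ⟨x, b⟩ => ?_)
  have hττ : τ (τ x) = x := by
    nth_rewrite 1 [← hτ_inv he]
    exact τ.symm_apply_apply x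
  by_cases hx : x ∈ e.source <;> simp [σ, hx, hsource, hττ]

end PartialEquiv

theorem exists_isFreeExtension_family {ι X : Type*} [InvolutiveInv ι] [Finite X]
    (ρ : ι → PartialEquiv X X) (hρ : ∀ i, ρ i⁻¹ = (ρ i).symm) :
    ∃ φ : ι → Equiv.Perm (X × Bool), (∀ i, φ i⁻¹ = (φ i)⁻¹) ∧
      ∀ i, (ρ i).IsFreeExtension (φ i) :=
  exists_forall_map_inv (fun i σ => (ρ i).IsFreeExtension σ) (fun i _ h => hρ i ▸ h.symm)
    fun i => by
      obtain ⟨σ, hσ, hσ_inv⟩ := (ρ i).exists_isFreeExtension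
      exact ⟨σ, hσ, fun hi => hσ_inv (by rw [← hρ, hi])⟩

theorem similarLE_prod_of_apply_eq {X Y : Type*} [Finite X] [Finite Y] {ε : ℝ}
    {σ τ : Equiv.Perm (X × Y)} (S : Set X) (hS : (Nat.card S : ℝ) ≤ ε * Nat.card X)
    (h : ∀ x ∉ S, ∀ y, σ (x, y) = τ (x, y)) : SimilarLE ε σ τ := by
  have hcard : Nat.card {z // σ z ≠ τ z} ≤ Nat.card (S × Y) :=
    Nat.card_le_card_of_injective
      (fun z => (⟨z.1.1, by_contra fun hz => z.2 (h _ hz _)⟩, z.1.2)) fun z w hzw =>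
        Subtype.ext (Prod.ext (congrArg (·.1.1) hzw) (congrArg (·.2) hzw))
  calc (Nat.card {z // σ z ≠ τ z} : ℝ) ≤ Nat.card S * Nat.card Y := by
        exact_mod_cast Nat.card_prod S Y ▸ hcard
    _ ≤ ε * Nat.card X * Nat.card Y := by gcongr
    _ = ε * Nat.card (X × Y) := by rw [Nat.card_prod]; push_cast; ring

theorem SimilarLE.permCongr {A A' : Type*} {ε : ℝ} {σ τ : Equiv.Perm A} (h : SimilarLE ε σ τ)
    (e : A ≃ A') : SimilarLE ε (e.permCongr σ) (e.permCongr τ) := by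
  have hdiff : Nat.card {a // e.permCongr σ a ≠ e.permCongr τ a} = Nat.card {a // σ a ≠ τ a} :=
    Nat.card_congr (e.subtypeEquiv fun a => by simp [Equiv.permCongr_apply]).symm
  rw [SimilarLE, hdiff, Nat.card_congr e.symm]
  exact h

theorem IsSpecialQuasiAction.permCongr {G A A' : Type*} [Group G] {F : Set G} {ε : ℝ}
    {φ : G → Equiv.Perm A} (h : IsSpecialQuasiAction F ε φ) (e : A ≃ A') :
    IsSpecialQuasiAction F ε fun g => e.permCongrHom (φ g) where
  map_one := (congrArg e.permCongrHom h.map_one).trans (_root_.map_one _)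
  map_inv g := (congrArg e.permCongrHom (h.map_inv g)).trans (_root_.map_inv _ _)
  fixed_point_free g hg hg1 a ha := by
    rw [Equiv.permCongrHom_coe, Equiv.permCongr_apply, ← e.eq_symm_apply] at ha
    exact h.fixed_point_free g hg hg1 _ ha
  approx_mul g₁ hg₁ g₂ hg₂ := by
    rw [← map_mul, Equiv.permCongrHom_coe]
    exact (h.approx_mul g₁ hg₁ g₂ hg₂).permCongr e

theorem natCard_subtype_prod_le {α β : Type*} [Finite α] [Finite β] (p : α × β → Prop)
    (A : α → Prop) {c : ℝ} (hc : 0 ≤ c) (h : ∀ a, ¬ A a → (Nat.card {b // p (a, b)} : ℝ) ≤ c) :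
    (Nat.card {x // p x} : ℝ) ≤ Nat.card {a // A a} * Nat.card β + Nat.card α * c := by
  classical
  have := Fintype.ofFinite α
  have := Fintype.ofFinite β
  have hfiber : ∀ a,
      (Nat.card {b // p (a, b)} : ℝ) ≤ (if A a then (Nat.card β : ℝ) else 0) + c := fun a => by
    by_cases ha : A a
    · simp only [ha, if_true]
      have : (Nat.card {b // p (a, b)} : ℝ) ≤ Nat.card β := by
        exact_mod_cast Finite.card_subtype_le _
      linarith
    · simpa [ha] using h a ha
  calc (Nat.card {x // p x} : ℝ) = ∑ a, (Nat.card {b // p (a, b)} : ℝ) := by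
        rw [Nat.card_congr (Equiv.subtypeProdEquivSigmaSubtype fun a b => p (a, b)),
          Nat.card_sigma]
        push_cast; rfl
    _ ≤ ∑ a, ((if A a then (Nat.card β : ℝ) else 0) + c) :=
        Finset.sum_le_sum fun a _ => hfiber a
    _ = Nat.card {a // A a} * Nat.card β + Nat.card α * c := by
        rw [Finset.sum_add_distrib, Finset.sum_ite, Finset.sum_const_zero, Finset.sum_const,
          Finset.sum_const, nsmul_eq_mul, nsmul_eq_mul, Finset.card_univ, add_zero,
          ← Fintype.card_subtype, Nat.card_eq_fintype_card (α := {a // A a}),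
          Nat.card_eq_fintype_card (α := β), Nat.card_eq_fintype_card (α := α)]

theorem natCard_mul_notMem_le {Q : Type*} [Group Q] (E : Finset Q) (g : Q) :
    Nat.card {q : E // g * q ∉ E} ≤ Nat.card ↥((g * ·) '' (E : Set Q) \ E) := by
  have : Finite ↥((g * ·) '' (E : Set Q) \ E) :=
    ((E.finite_toSet.image _).subset Set.sdiff_subset).to_subtype
  refine Nat.card_le_card_of_injective
    (fun q => ⟨g * q.1, ⟨q.1, q.1.2, rfl⟩, q.2⟩) fun q r hqr => ?_
  exact Subtype.ext (Subtype.ext (mul_left_cancel (congrArg Subtype.val hqr)))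

def mulDefect {G X : Type*} [Mul G] (ρ : G → PartialEquiv X X) (g₁ g₂ : G) : Set X :=
  {x | ¬ (x ∈ (ρ g₂).source ∧ ρ g₂ x ∈ (ρ g₁).source ∧ x ∈ (ρ (g₁ * g₂)).source ∧
    ρ (g₁ * g₂) x = ρ g₁ (ρ g₂ x))}

theorem isSpecialQuasiAction_of_isFreeExtension {G X : Type*} [Group G] [Finite X]
    {ρ : G → PartialEquiv X X} {φ : G → Equiv.Perm (X × Bool)}
    (hφ_inv : ∀ g, φ g⁻¹ = (φ g)⁻¹) (hφ : ∀ g, (ρ g).IsFreeExtension (φ g))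
    {F : Set G} {ε : ℝ} (hone : ∀ x, x ∈ (ρ 1).source ∧ ρ 1 x = x)
    (hfree : ∀ g ∈ F, g ≠ 1 → ∀ x ∈ (ρ g).source, ρ g x ≠ x)
    (hmul : ∀ g₁ ∈ F, ∀ g₂ ∈ F, (Nat.card (mulDefect ρ g₁ g₂) : ℝ) ≤ ε * Nat.card X) :
    IsSpecialQuasiAction F ε φ where
  map_one := Equiv.ext fun ⟨x, b⟩ => by
    rw [(hφ 1).apply_of_mem x (hone x).1, (hone x).2]; rfl
  map_inv := hφ_inv
  fixed_point_free g hg hg1 := fun ⟨x, b⟩ => by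
    by_cases hx : x ∈ (ρ g).source
    · rw [(hφ g).apply_of_mem x hx]
      exact fun h => hfree g hg hg1 x hx (congrArg Prod.fst h)
    · exact (hφ g).apply_ne_of_notMem x hx b
  approx_mul g₁ hg₁ g₂ hg₂ :=
    similarLE_prod_of_apply_eq _ (hmul g₁ hg₁ g₂ hg₂) fun x hx b => by
      obtain ⟨h₂, h₁, h₁₂, hcomp⟩ := not_not.mp hx
      rw [Equiv.Perm.mul_apply, (hφ g₂).apply_of_mem x h₂, (hφ g₁).apply_of_mem _ h₁,
        (hφ _).apply_of_mem x h₁₂, hcomp]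

namespace QuotientGroup

variable {G : Type*} [Group G] (N : Subgroup G) [N.Normal]

noncomputable def outCocycle (g : G) (q : G ⧸ N) : N :=
  ⟨(↑g * q).out⁻¹ * g * q.out, by
    rw [← eq_one_iff, mk_mul, mk_mul, mk_inv, out_eq', out_eq']
    group⟩

variable {N}

theorem coe_outCocycle (g : G) (q : G ⧸ N) :
    (outCocycle N g q : G) = (↑g * q).out⁻¹ * g * q.out := rfl

theorem outCocycle_one (q : G ⧸ N) : outCocycle N 1 q = 1 := by
  ext
  simp [coe_outCocycle]

theorem outCocycle_mul (g₁ g₂ : G) (q : G ⧸ N) :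
    outCocycle N (g₁ * g₂) q = outCocycle N g₁ (g₂ * q) * outCocycle N g₂ q := by
  ext
  simp only [coe_outCocycle, Subgroup.coe_mul, mk_mul, mul_assoc]
  group

theorem outCocycle_inv (g : G) (q : G ⧸ N) :
    outCocycle N g⁻¹ (g * q) = (outCocycle N g q)⁻¹ := by
  rw [eq_inv_iff_mul_eq_one, ← outCocycle_mul, inv_mul_cancel, outCocycle_one]

theorem outCocycle_ne_one {g : G} {q : G ⧸ N} (hq : g * q = q) (hg : g ≠ 1) :
    outCocycle N g q ≠ 1 := by
  rw [Ne, Subtype.ext_iff, coe_outCocycle, hq, Subgroup.coe_one, mul_assoc, inv_mul_eq_one,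
    eq_comm, mul_eq_right]
  exact hg

end QuotientGroup

section Twisted

open QuotientGroup

variable {G : Type*} [Group G] {N : Subgroup G} [N.Normal] {B : Type*}
  (ψ : N → Equiv.Perm B) (E : Finset (G ⧸ N))

open scoped Classical in
noncomputable def twistedMap (g : G) (x : E × B) : E × B :=
  if h : (g : G ⧸ N) * x.1 ∈ E then (⟨_, h⟩, ψ (outCocycle N g x.1) x.2) else x

variable {ψ} {E}

theorem twistedMap_of_mem {g : G} {x : E × B} (h : (g : G ⧸ N) * x.1 ∈ E) :
    twistedMap ψ E g x = (⟨_, h⟩, ψ (outCocycle N g x.1) x.2) := dif_pos h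

theorem twistedMap_inv_twistedMap (hψ : ∀ m, ψ m⁻¹ = (ψ m)⁻¹) {g : G} {x : E × B}
    (h : (g : G ⧸ N) * x.1 ∈ E) : twistedMap ψ E g⁻¹ (twistedMap ψ E g x) = x := by
  rw [twistedMap_of_mem h, twistedMap_of_mem (by simp)]
  ext
  · simp
  · simp [outCocycle_inv, hψ]

variable (E) in
noncomputable def twistedPartialEquiv (hψ : ∀ m, ψ m⁻¹ = (ψ m)⁻¹) (g : G) :
    PartialEquiv (E × B) (E × B) where
  toFun := twistedMap ψ E g
  invFun := twistedMap ψ E g⁻¹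
  source := {x | (g : G ⧸ N) * x.1 ∈ E}
  target := {x | ((g⁻¹ : G) : G ⧸ N) * x.1 ∈ E}
  map_source' x h := by simp [twistedMap_of_mem h]
  map_target' x h := by simp [twistedMap_of_mem h]
  left_inv' x h := twistedMap_inv_twistedMap hψ h
  right_inv' x h := by simpa using twistedMap_inv_twistedMap hψ (g := g⁻¹) h

variable (hψ : ∀ m, ψ m⁻¹ = (ψ m)⁻¹)

theorem twistedPartialEquiv_inv (g : G) :
    twistedPartialEquiv E hψ g⁻¹ = (twistedPartialEquiv E hψ g).symm :=
  PartialEquiv.ext (fun _ => rfl) (fun _ => by simp [twistedPartialEquiv]) rfl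

theorem twistedPartialEquiv_one (hψ_one : ψ 1 = 1) (x : E × B) :
    x ∈ (twistedPartialEquiv E hψ 1).source ∧ twistedPartialEquiv E hψ 1 x = x := by
  have hx : ((1 : G) : G ⧸ N) * x.1 ∈ E := by simp
  refine ⟨hx, ?_⟩
  change twistedMap ψ E 1 x = x
  rw [twistedMap_of_mem hx]
  ext
  · simp
  · simp [outCocycle_one, hψ_one]

theorem twistedPartialEquiv_apply_ne {g : G} (hg : g ≠ 1)
    (hψ_free : ∀ q : E, outCocycle N g q ≠ 1 → ∀ b, ψ (outCocycle N g q) b ≠ b) :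
    ∀ x ∈ (twistedPartialEquiv E hψ g).source, twistedPartialEquiv E hψ g x ≠ x := by
  intro x hx hfix
  change twistedMap ψ E g x = x at hfix
  rw [twistedMap_of_mem hx, Prod.ext_iff] at hfix
  exact hψ_free x.1 (outCocycle_ne_one (congrArg Subtype.val hfix.1) hg) x.2 hfix.2

theorem notMem_mulDefect_twistedPartialEquiv {g₁ g₂ : G} {x : E × B}
    (h₂ : (g₂ : G ⧸ N) * x.1 ∈ E) (h₁₂ : ((g₁ * g₂ : G) : G ⧸ N) * x.1 ∈ E)
    (hmul : ψ (outCocycle N g₁ (g₂ * x.1) * outCocycle N g₂ x.1) x.2 =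
      ψ (outCocycle N g₁ (g₂ * x.1)) (ψ (outCocycle N g₂ x.1) x.2)) :
    x ∉ mulDefect (twistedPartialEquiv E hψ) g₁ g₂ := by
  have h₁ : (g₁ : G ⧸ N) * (g₂ * x.1) ∈ E := by rwa [mk_mul, mul_assoc] at h₁₂
  refine not_not.mpr ⟨h₂, ?_, h₁₂, ?_⟩
  · change twistedMap ψ E g₂ x ∈ {y : E × B | (g₁ : G ⧸ N) * y.1 ∈ E}
    rwa [twistedMap_of_mem h₂]
  · change twistedMap ψ E (g₁ * g₂) x = twistedMap ψ E g₁ (twistedMap ψ E g₂ x)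
    rw [twistedMap_of_mem h₁₂, twistedMap_of_mem h₂, twistedMap_of_mem h₁]
    ext
    · simp [mul_assoc]
    · simp [outCocycle_mul, hmul]

theorem natCard_mulDefect_twistedPartialEquiv_le [Finite B] {g₁ g₂ : G} {δ : ℝ} (hδ : 0 ≤ δ)
    (h₂ : (Nat.card {q : E // (g₂ : G ⧸ N) * q ∉ E} : ℝ) ≤ δ * E.card)
    (h₁₂ : (Nat.card {q : E // ((g₁ * g₂ : G) : G ⧸ N) * q ∉ E} : ℝ) ≤ δ * E.card)
    (hψ_mul : ∀ q : E, SimilarLE δ (ψ (outCocycle N g₁ (g₂ * q) * outCocycle N g₂ q))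
        (ψ (outCocycle N g₁ (g₂ * q)) * ψ (outCocycle N g₂ q))) :
    (Nat.card (mulDefect (twistedPartialEquiv E hψ) g₁ g₂) : ℝ) ≤
      3 * δ * Nat.card (E × B) := by
  classical
  let A : E → Prop := fun q => (g₂ : G ⧸ N) * q ∉ E ∨ ((g₁ * g₂ : G) : G ⧸ N) * q ∉ E
  have hA : (Nat.card {q // A q} : ℝ) ≤ 2 * δ * E.card := by
    have := Fintype.card_subtype_or (fun q : E => (g₂ : G ⧸ N) * q ∉ E)
      (fun q : E => ((g₁ * g₂ : G) : G ⧸ N) * q ∉ E)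
    simp only [← Nat.card_eq_fintype_card] at this
    have hA_le : (Nat.card {q // A q} : ℝ) ≤ Nat.card {q : E // (g₂ : G ⧸ N) * q ∉ E} +
        Nat.card {q : E // ((g₁ * g₂ : G) : G ⧸ N) * q ∉ E} := by exact_mod_cast this
    linarith
  have hfiber : ∀ q, ¬ A q →
      (Nat.card {b // (q, b) ∈ mulDefect (twistedPartialEquiv E hψ) g₁ g₂} : ℝ) ≤
        δ * Nat.card B := by
    intro q hq
    simp only [A, not_or, not_not] at hq
    refine le_trans (Nat.cast_le.mpr (Nat.card_le_card_of_injective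
      (Subtype.impEmbedding _ _ fun b hb => ?_) (Subtype.impEmbedding _ _ _).injective))
      (hψ_mul q)
    by_contra hmul
    rw [Equiv.Perm.mul_apply] at hmul
    exact notMem_mulDefect_twistedPartialEquiv (x := (q, b)) hψ hq.1 hq.2 hmul hb
  calc (Nat.card (mulDefect (twistedPartialEquiv E hψ) g₁ g₂) : ℝ)
      ≤ Nat.card {q // A q} * Nat.card B + Nat.card E * (δ * Nat.card B) :=
        natCard_subtype_prod_le _ A (by positivity) hfiber
    _ ≤ 2 * δ * E.card * Nat.card B + E.card * (δ * Nat.card B) := by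
        rw [Nat.card_eq_finsetCard]; gcongr
    _ = 3 * δ * Nat.card (E × B) := by
        rw [Nat.card_prod, Nat.card_eq_finsetCard]; push_cast; ring

open scoped Pointwise in
theorem exists_isSpecialQuasiAction_prod_bool [DecidableEq G] [Finite B] {F : Finset G}
    {FN : Set N} {δ : ℝ} (hδ : 0 ≤ δ)
    (hE : ∀ g ∈ F ∪ F * F, (Nat.card {q : E // (g : G ⧸ N) * q ∉ E} : ℝ) ≤ δ * E.card)
    (hψ : IsSpecialQuasiAction FN δ ψ)
    (hFN : ∀ g ∈ F, ∀ h ∈ insert 1 F, ∀ q ∈ E, outCocycle N g (h * q) ∈ FN) :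
    ∃ φ : G → Equiv.Perm ((E × B) × Bool), IsSpecialQuasiAction (F : Set G) (3 * δ) φ := by
  have hFN' : ∀ g ∈ F, ∀ q : E, outCocycle N g q ∈ FN := fun g hg q => by
    simpa using hFN g hg 1 (Finset.mem_insert_self 1 F) q q.2
  obtain ⟨φ, hφ_inv, hφ⟩ :=
    exists_isFreeExtension_family _ (twistedPartialEquiv_inv (E := E) hψ.map_inv)
  refine ⟨φ, isSpecialQuasiAction_of_isFreeExtension hφ_inv hφ
    (twistedPartialEquiv_one _ hψ.map_one) (fun g hg hg1 => ?_) fun g₁ hg₁ g₂ hg₂ => ?_⟩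
  · exact twistedPartialEquiv_apply_ne _ hg1 fun q hq b =>
      hψ.fixed_point_free _ (hFN' g hg q) hq b
  · exact natCard_mulDefect_twistedPartialEquiv_le hψ.map_inv hδ
      (hE g₂ (Finset.mem_union_left _ hg₂))
      (hE _ (Finset.mem_union_right _ (Finset.mul_mem_mul hg₁ hg₂)))
      fun q => hψ.approx_mul _ (hFN g₁ hg₁ g₂ (Finset.mem_insert_of_mem hg₂) q q.2) _
        (hFN' g₂ hg₂ q)

end Twisted

open QuotientGroup Pointwise in
/-- An extension of a sofic group by an amenable group is sofic. -/
theorem isSofic_of_extension {G : Type*} [Group G] (N : Subgroup G) [N.Normal]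
    (hN : IsSofic N) (hQ : IsAmenable (G ⧸ N)) : IsSofic G := by
  classical
  intro ε hε hε1 F
  obtain ⟨E, hE, hE_folner⟩ := hQ ((F ∪ F * F).image (↑)) (ε / 3) (by positivity)
  have hE_mul : ∀ g ∈ F ∪ F * F,
      (Nat.card {q : E // (g : G ⧸ N) * q ∉ E} : ℝ) ≤ ε / 3 * E.card := fun g hg =>
    (Nat.cast_le.mpr (natCard_mul_notMem_le E _)).trans
      (hE_folner _ (Finset.mem_image_of_mem _ hg))
  let FN : Finset N := ((F ×ˢ insert 1 F) ×ˢ E).image fun p => outCocycle N p.1.1 (p.1.2 * p.2)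
  obtain ⟨B, _, _, ψ, hψ⟩ := hN (ε / 3) (by positivity) (by linarith) FN
  obtain ⟨φ, hφ⟩ := exists_isSpecialQuasiAction_prod_bool (by positivity) hE_mul hψ
    fun g hg h hh q hq => Finset.mem_image.mpr
      ⟨((g, h), q), Finset.mk_mem_product (Finset.mk_mem_product hg hh) hq, rfl⟩
  have : Nonempty E := hE.to_subtype
  -- `IsSofic` asks for a finite set in `Type`, so transport the action to `Fin _`.
  let e := Finite.equivFin ((E × B) × Bool)
  exact ⟨Fin _, inferInstance, ⟨e (Classical.arbitrary _)⟩, _,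
    (mul_div_cancel₀ ε three_ne_zero ▸ hφ).permCongr e⟩
end
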